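/- arXiv:1707.06792 — 2 statements merged into one kernel-verified Lean document; each statement's English description precedes it below -/
import Mathlib

section
/- A finite undirected graph is decomposable (i.e., it is complete or admits a decomposition (A,B) with A∪B=V, A∩B complete and separating A from B, such that the induced subgraphs on A and B are decomposable) if and only if it is chordal, i.e., every cycle of length at least 4 has a chord. -/
/-!
Decomposable graphs are chordal by induction on the decomposition: a cycle that lies in neither
part crosses the complete separator `A ∩ B` on both of its arcs between a vertex of `A \ B` and a
vertex of `B \ A`, and the two crossing points span a chord.

Conversely (Dirac), let `a, b` be non-adjacent in a non-complete `S` and let `T ⊆ S` be a minimal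
set separating them in `S`. By minimality every vertex of `T` has neighbours in the component `Cₐ`
of `a` and in the component of `b` in `S \ T`; two non-adjacent vertices of `T` would then be
joined by shortest paths through either component, which close up to a chordless cycle of length
at least `4`. So `T` is complete, and `(Cₐ ∪ T, S \ Cₐ)` is a proper decomposition of `S`.
-/

open SimpleGraph

variable {V : Type*}

/-- A set of vertices is complete in `G` if all pairs of distinct vertices in it are adjacent. -/
def IsCompleteOn (G : SimpleGraph V) (A : Set V) : Prop :=
  ∀ a ∈ A, ∀ b ∈ A, a ≠ b → G.Adj a b

/-- `A ∩ B` separates `A` from `B`: every path (in the induced subgraph on `A ∪ B`)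
between a vertex of `A \ B` and a vertex of `B \ A` intersects `A ∩ B`. -/
def Separates (G : SimpleGraph V) (A B : Set V) : Prop :=
  ∀ a ∈ A \ B, ∀ b ∈ B \ A, ∀ w : G.Walk a b,
    (∀ v ∈ w.support, v ∈ A ∪ B) → ∃ v ∈ w.support, v ∈ A ∩ B

/-- Recursive notion of decomposability of the induced subgraph of `G` on a vertex set:
it is complete, or it admits a decomposition `(A, B)` (i.e. `A ∩ B` is complete and
separates `A` from `B`) into decomposable induced subgraphs. -/
inductive DecomposableOn (G : SimpleGraph V) : Set V → Prop
  | complete (A : Set V) : IsCompleteOn G A → DecomposableOn G A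
  | decomp (A B : Set V) : IsCompleteOn G (A ∩ B) → Separates G A B →
      DecomposableOn G A → DecomposableOn G B → DecomposableOn G (A ∪ B)

/-- A graph is decomposable if its full vertex set is. -/
def Decomposable (G : SimpleGraph V) : Prop := DecomposableOn G Set.univ

/-- A cycle has a chord: an edge of `G` joining two vertices of the cycle which is not
an edge of the cycle (i.e. joining two non-consecutive vertices of the cycle). -/
def HasChord (G : SimpleGraph V) {v : V} (c : G.Walk v v) : Prop :=
  ∃ a ∈ c.support, ∃ b ∈ c.support, G.Adj a b ∧ s(a, b) ∉ c.edges

/-- A graph is chordal if every cycle of length at least `4` has a chord. -/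
def Chordal (G : SimpleGraph V) : Prop :=
  ∀ (v : V) (c : G.Walk v v), c.IsCycle → 4 ≤ c.length → HasChord G c

namespace SimpleGraph

def ReachableIn (G : SimpleGraph V) (W : Set V) (u v : V) : Prop :=
  ∃ p : G.Walk u v, ∀ z ∈ p.support, z ∈ W

variable {G : SimpleGraph V} {W W' : Set V} {u v x y : V}

namespace ReachableIn

lemma refl (hu : u ∈ W) : G.ReachableIn W u u :=
  ⟨.nil, by simpa using hu⟩

lemma of_adj (hu : u ∈ W) (hv : v ∈ W) (h : G.Adj u v) : G.ReachableIn W u v :=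
  ⟨h.toWalk, by simp [hu, hv]⟩

lemma symm (h : G.ReachableIn W u v) : G.ReachableIn W v u := by
  obtain ⟨p, hp⟩ := h
  exact ⟨p.reverse, by simpa using hp⟩

lemma trans (h₁ : G.ReachableIn W u v) (h₂ : G.ReachableIn W v x) : G.ReachableIn W u x := by
  obtain ⟨p, hp⟩ := h₁
  obtain ⟨q, hq⟩ := h₂
  exact ⟨p.append q, by simp only [Walk.mem_support_append_iff]; grind⟩

lemma mono (h : G.ReachableIn W u v) (hW : W ⊆ W') : G.ReachableIn W' u v := by
  obtain ⟨p, hp⟩ := h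
  exact ⟨p, fun z hz => hW (hp z hz)⟩

lemma right_mem (h : G.ReachableIn W u v) : v ∈ W := by
  obtain ⟨p, hp⟩ := h
  exact hp v p.end_mem_support

lemma adj_of_pair (huv : u ≠ v) (h : G.ReachableIn {u, v} u v) : G.Adj u v := by
  obtain ⟨p, hp⟩ := h
  obtain ⟨d, hd, hfst, hsnd⟩ := p.exists_boundary_dart {u} rfl huv.symm
  have hfst' : d.fst = u := hfst
  have hsnd' : d.snd = v :=
    (hp d.snd (p.dart_snd_mem_support_of_mem_darts hd)).resolve_left hsnd
  exact hfst' ▸ hsnd' ▸ d.adj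

lemma within_component (h : G.ReachableIn W u v) :
    G.ReachableIn {z | G.ReachableIn W u z} u v := by
  classical
  obtain ⟨p, hp⟩ := h
  exact ⟨p, fun z hz =>
    ⟨p.takeUntil z hz, fun y hy => hp y (p.support_takeUntil_subset_support hz hy)⟩⟩

lemma of_mem_component (hx : G.ReachableIn W u x) (hy : G.ReachableIn W u y) :
    G.ReachableIn {z | G.ReachableIn W u z} x y :=
  hx.within_component.symm.trans hy.within_component

lemma of_adj_right (h : G.ReachableIn W u v) (hx : x ∈ W) (hvx : G.Adj v x) :
    G.ReachableIn W u x :=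
  h.trans (of_adj h.right_mem hx hvx)

end ReachableIn

end SimpleGraph

namespace SimpleGraph.Walk

variable {G : SimpleGraph V} {u v x y : V}

lemma exists_shorter_of_adj_append (p : G.Walk u x) (q : G.Walk x y) (r : G.Walk y v)
    (hxy : G.Adj x y) (he : s(x, y) ∉ q.edges) :
    ∃ Q : G.Walk u v, Q.length < (p.append (q.append r)).length ∧
      Q.support ⊆ (p.append (q.append r)).support := by
  refine ⟨p.append (cons hxy r), ?_, ?_⟩
  · have hq₀ : q.length ≠ 0 := fun h => hxy.ne (eq_of_length_eq_zero h)
    have hq₁ : q.length ≠ 1 := by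
      intro h
      cases q with
      | nil => simp at h
      | cons h' q' =>
        obtain rfl := eq_of_length_eq_zero (by simpa using h : q'.length = 0)
        simp at he
    simp only [length_append, length_cons]
    omega
  · intro z hz
    simp only [mem_support_append_iff, support_cons, List.mem_cons] at hz ⊢
    grind [start_mem_support]

/-- Replacing the stretch of a walk between the ends of a chord by the chord shortens it. -/
lemma exists_shorter_of_adj [DecidableEq V] (P : G.Walk u v) (hx : x ∈ P.support)
    (hy : y ∈ P.support) (hxy : G.Adj x y) (he : s(x, y) ∉ P.edges) :
    ∃ Q : G.Walk u v, Q.length < P.length ∧ Q.support ⊆ P.support := by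
  obtain ⟨p, p', rfl⟩ := mem_support_iff_exists_append.mp hx
  rcases (mem_support_append_iff p p').mp hy with hy | hy
  · obtain ⟨r, q, rfl⟩ := mem_support_iff_exists_append.mp hy
    rw [← append_assoc] at he ⊢
    refine exists_shorter_of_adj_append r q p' hxy.symm fun h => he ?_
    rw [Sym2.eq_swap] at h
    simp [edges_append, h]
  · obtain ⟨q, r, rfl⟩ := mem_support_iff_exists_append.mp hy
    refine exists_shorter_of_adj_append p q r hxy fun h => he ?_
    simp [edges_append, h]

/-- The bypass of a shortest walk inside `W`. -/
lemma exists_chordless_path_of_reachableIn {W : Set V} (h : G.ReachableIn W u v) :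
    ∃ P : G.Walk u v, P.IsPath ∧ (∀ z ∈ P.support, z ∈ W) ∧
      ∀ x ∈ P.support, ∀ y ∈ P.support, G.Adj x y → s(x, y) ∈ P.edges := by
  classical
  obtain ⟨P, hPW, hmin⟩ :=
    exists_minimalFor_of_wellFoundedLT (fun P : G.Walk u v => ∀ z ∈ P.support, z ∈ W) length h
  have hbW : ∀ z ∈ P.bypass.support, z ∈ W := fun z hz =>
    hPW z (P.support_bypass_subset_support hz)
  refine ⟨P.bypass, P.bypass_isPath, hbW, fun x hx y hy hxy => ?_⟩
  by_contra he
  obtain ⟨Q, hQ, hQP⟩ := P.bypass.exists_shorter_of_adj hx hy hxy he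
  have hPb := P.length_bypass_le_length
  have := hmin (fun z hz => hbW z (hQP hz)) (hQ.le.trans hPb)
  omega

lemma two_le_length (p : G.Walk u v) (huv : u ≠ v) (hnadj : ¬ G.Adj u v) : 2 ≤ p.length := by
  have h₀ : p.length ≠ 0 := fun h => huv (eq_of_length_eq_zero h)
  have h₁ : p.length ≠ 1 := fun h => hnadj (adj_of_length_eq_one h)
  omega

end SimpleGraph.Walk

open SimpleGraph.Walk

variable {G : SimpleGraph V}

/-- The interiors of the two arcs are disjoint, so an edge between them is not an edge of the
cycle. -/
lemma hasChord_append_of_isCompleteOn {K : Set V} (hK : IsCompleteOn G K) {x y u w : V}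
    {p : G.Walk x y} {q : G.Walk y x} (hc : (p.append q).IsCycle)
    (hu : u ∈ p.support.tail) (huy : u ≠ y) (hw : w ∈ q.support.tail) (hwx : w ≠ x)
    (huK : u ∈ K) (hwK : w ∈ K) : HasChord G (p.append q) := by
  have hdisj : p.support.tail.Disjoint q.support.tail := by
    have := hc.support_nodup
    rw [tail_support_append] at this
    exact List.disjoint_of_nodup_append this
  have huw : u ≠ w := fun h => hdisj hu (h ▸ hw)
  refine ⟨u, (mem_support_append_iff p q).mpr (.inl (List.mem_of_mem_tail hu)),
    w, (mem_support_append_iff p q).mpr (.inr (List.mem_of_mem_tail hw)),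
    hK u huK w hwK huw, ?_⟩
  rw [edges_append, List.mem_append]
  rintro (he | he)
  · exact hdisj ((p.mem_support_iff.mp (p.snd_mem_support_of_mem_edges he)).resolve_left hwx) hw
  · exact hdisj hu ((q.mem_support_iff.mp (q.fst_mem_support_of_mem_edges he)).resolve_left huy)

lemma hasChord_of_isCompleteOn {S : Set V} (hS : IsCompleteOn G S) {v : V} {c : G.Walk v v}
    (hc : c.IsCycle) (hlen : 4 ≤ c.length) (hcS : ∀ z ∈ c.support, z ∈ S) :
    HasChord G c := by
  -- the shorter shapes of `c` are ruled out by `hlen`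
  match c, hc, hlen, hcS with
  | @cons _ _ _ x₁ _ h₁ (@cons _ _ _ x₂ _ h₂ (@cons _ _ _ x₃ _ h₃ r)), hc, hlen, hcS =>
    have hr : ¬ r.Nil := by
      rw [← length_eq_zero_iff]
      simp only [length_cons] at hlen
      omega
    have hx₃ : x₃ ∉ r.support.tail := by
      have hnd := hc.support_nodup
      simp only [support_cons, List.tail_cons, List.nodup_cons] at hnd
      exact (List.nodup_cons.mp (r.cons_tail_support ▸ hnd.2.2)).1
    exact hasChord_append_of_isCompleteOn (p := cons h₁ (cons h₂ nil)) (q := cons h₃ r)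
      (u := x₁) (w := x₃) hS hc (by simp) h₂.ne (by simp)
      (fun h => hx₃ (h ▸ end_mem_tail_support hr)) (hcS _ (by simp)) (hcS _ (by simp))

lemma HasChord.of_rotate [DecidableEq V] {v x : V} {c : G.Walk v v} (hx : x ∈ c.support)
    (h : HasChord G (c.rotate x hx)) : HasChord G c := by
  obtain ⟨a, ha, b, hb, hab, he⟩ := h
  exact ⟨a, (mem_support_rotate_iff c x hx).mp ha, b, (mem_support_rotate_iff c x hx).mp hb, hab,
    fun h => he ((c.rotate_edges x hx).mem_iff.mpr h)⟩

lemma hasChord_of_separates_of_mem {A B : Set V} (hAB : IsCompleteOn G (A ∩ B))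
    (hsep : Separates G A B) {x y : V} {c : G.Walk x x} (hc : c.IsCycle)
    (hcAB : ∀ z ∈ c.support, z ∈ A ∪ B) (hx : x ∈ A \ B) (hy : y ∈ B \ A)
    (hyc : y ∈ c.support) : HasChord G c := by
  obtain ⟨p, q, rfl⟩ := mem_support_iff_exists_append.mp hyc
  obtain ⟨u, hup, huAB⟩ := hsep x hx y hy p fun z hz =>
    hcAB z ((mem_support_append_iff p q).mpr (.inl hz))
  obtain ⟨w, hwq, hwAB⟩ := hsep x hx y hy q.reverse fun z hz =>
    hcAB z ((mem_support_append_iff p q).mpr (.inr (by simpa using hz)))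
  rw [support_reverse, List.mem_reverse] at hwq
  have hux : u ≠ x := fun h => hx.2 (h ▸ huAB.2)
  have huy : u ≠ y := fun h => hy.2 (h ▸ huAB.1)
  have hwx : w ≠ x := fun h => hx.2 (h ▸ hwAB.2)
  have hwy : w ≠ y := fun h => hy.2 (h ▸ hwAB.1)
  exact hasChord_append_of_isCompleteOn hAB hc ((p.mem_support_iff.mp hup).resolve_left hux) huy
    ((q.mem_support_iff.mp hwq).resolve_left hwy) hwx huAB hwAB

lemma hasChord_of_separates {A B : Set V} (hAB : IsCompleteOn G (A ∩ B)) (hsep : Separates G A B)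
    {v : V} {c : G.Walk v v} (hc : c.IsCycle) (hcAB : ∀ z ∈ c.support, z ∈ A ∪ B)
    (hcA : ¬ ∀ z ∈ c.support, z ∈ A) (hcB : ¬ ∀ z ∈ c.support, z ∈ B) :
    HasChord G c := by
  classical
  simp only [not_forall] at hcA hcB
  obtain ⟨y, hyc, hyA⟩ := hcA
  obtain ⟨x, hxc, hxB⟩ := hcB
  have hx : x ∈ A \ B := ⟨(hcAB x hxc).resolve_right hxB, hxB⟩
  have hy : y ∈ B \ A := ⟨(hcAB y hyc).resolve_left hyA, hyA⟩
  refine .of_rotate hxc (hasChord_of_separates_of_mem hAB hsep (hc.rotate hxc) (fun z hz => ?_)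
    hx hy ((mem_support_rotate_iff c x hxc).mpr hyc))
  exact hcAB z ((mem_support_rotate_iff c x hxc).mp hz)

lemma DecomposableOn.hasChord {S : Set V} (hS : DecomposableOn G S) {v : V} {c : G.Walk v v}
    (hc : c.IsCycle) (hlen : 4 ≤ c.length) (hcS : ∀ z ∈ c.support, z ∈ S) :
    HasChord G c := by
  induction hS with
  | complete S hS => exact hasChord_of_isCompleteOn hS hc hlen hcS
  | decomp A B hAB hsep _ _ ihA ihB =>
    by_cases hcA : ∀ z ∈ c.support, z ∈ A
    · exact ihA hcA
    by_cases hcB : ∀ z ∈ c.support, z ∈ B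
    · exact ihB hcB
    exact hasChord_of_separates hAB hsep hc hcS hcA hcB

lemma Chordal.adj_of_reachableIn (hG : Chordal G) {W₁ W₂ : Set V} {u v : V}
    (hW : Disjoint W₁ W₂) (hW₁₂ : ∀ x ∈ W₁, ∀ y ∈ W₂, ¬ G.Adj x y) (huv : u ≠ v)
    (h₁ : G.ReachableIn (W₁ ∪ {u, v}) u v) (h₂ : G.ReachableIn (W₂ ∪ {u, v}) v u) :
    G.Adj u v := by
  by_contra hnadj
  obtain ⟨P, hP, hPW, hPc⟩ := exists_chordless_path_of_reachableIn h₁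
  obtain ⟨Q, hQ, hQW, hQc⟩ := exists_chordless_path_of_reachableIn h₂
  have hmeet : ∀ z ∈ P.support, z ∈ Q.support → z = u ∨ z = v := by
    intro z hzP hzQ
    rcases hPW z hzP with hz₁ | hz
    · rcases hQW z hzQ with hz₂ | hz
      · exact absurd hz₂ (Set.disjoint_left.mp hW hz₁)
      · simpa using hz
    · simpa using hz
  have hcyc : (P.append Q).IsCycle := by
    refine hP.isCycle_append hQ (fun z hzP hzQ => ?_) (.inl (P.two_le_length huv hnadj))
    rcases hmeet z (List.mem_of_mem_tail hzP) (List.mem_of_mem_tail hzQ) with rfl | rfl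
    · exact (List.nodup_cons.mp (P.cons_tail_support ▸ hP.support_nodup)).1 hzP
    · exact (List.nodup_cons.mp (Q.cons_tail_support ▸ hQ.support_nodup)).1 hzQ
  have hcross : ∀ x ∈ P.support, ∀ y ∈ Q.support, G.Adj x y →
      s(x, y) ∈ (P.append Q).edges := by
    intro x hxP y hyQ hxy
    rw [edges_append, List.mem_append]
    by_cases hxQ : x ∈ Q.support
    · exact .inr (hQc x hxQ y hyQ hxy)
    by_cases hyP : y ∈ P.support
    · exact .inl (hPc x hxP y hyP hxy)
    have hx : x ∈ W₁ :=
      (hPW x hxP).resolve_right (by grind [start_mem_support, end_mem_support])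
    have hy : y ∈ W₂ :=
      (hQW y hyQ).resolve_right (by grind [start_mem_support, end_mem_support])
    exact absurd hxy (hW₁₂ x hx y hy)
  obtain ⟨x, hx, y, hy, hxy, he⟩ :=
    hG u _ hcyc (by rw [length_append]; linarith [P.two_le_length huv hnadj,
      Q.two_le_length huv.symm fun h => hnadj h.symm])
  rw [mem_support_append_iff] at hx hy
  rw [edges_append, List.mem_append] at he
  rcases hx with hx | hx <;> rcases hy with hy | hy
  · exact he (.inl (hPc x hx y hy hxy))
  · exact he (by simpa [edges_append] using hcross x hx y hy hxy)
  · exact he (by simpa [edges_append, Sym2.eq_swap] using hcross y hy x hx hxy.symm)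
  · exact he (.inr (hQc x hx y hy hxy))

variable {W : Set V} {a b t u v x y : V}

lemma exists_adj_of_reachableIn_insert (ha : a ∈ W) (hab : ¬ G.ReachableIn W a b)
    (h : G.ReachableIn (insert t W) a b) : ∃ x, G.ReachableIn W a x ∧ G.Adj x t := by
  obtain ⟨p, hp⟩ := h
  obtain ⟨d, hd, hfst, hsnd⟩ :=
    p.exists_boundary_dart {x | G.ReachableIn W a x} (.refl ha) hab
  rcases hp d.snd (p.dart_snd_mem_support_of_mem_darts hd) with h | h
  · exact ⟨d.fst, hfst, h ▸ d.adj⟩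
  · exact absurd (ReachableIn.of_adj_right hfst h d.adj) hsnd

lemma reachableIn_union_pair (hx : G.ReachableIn W a x) (hy : G.ReachableIn W a y)
    (hux : G.Adj u x) (hyv : G.Adj y v) :
    G.ReachableIn ({z | G.ReachableIn W a z} ∪ {u, v}) u v :=
  ((ReachableIn.of_adj (by simp) (.inl hx) hux).trans
    ((hx.of_mem_component hy).mono Set.subset_union_left)).of_adj_right (by simp) hyv

lemma Chordal.isCompleteOn_of_minimal (hG : Chordal G) {S T : Set V} (ha : a ∈ S) (hb : b ∈ S)
    (hT : Minimal (fun T => T ⊆ S \ {a, b} ∧ ¬ G.ReachableIn (S \ T) a b) T) :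
    IsCompleteOn G T := by
  have haT : a ∈ S \ T := ⟨ha, fun h => (hT.1.1 h).2 (.inl rfl)⟩
  have hbT : b ∈ S \ T := ⟨hb, fun h => (hT.1.1 h).2 (.inr rfl)⟩
  have hins : ∀ t ∈ T, G.ReachableIn (insert t (S \ T)) a b := by
    intro t ht
    by_contra h
    have hsub : S \ (T \ {t}) ⊆ insert t (S \ T) := by
      rintro x ⟨hxS, hxT⟩
      by_cases hxt : x = t
      exacts [.inl hxt, .inr ⟨hxS, fun h => hxT ⟨h, hxt⟩⟩]
    have hmin := hT.2 ⟨Set.sdiff_subset.trans hT.1.1, fun h' => h (h'.mono hsub)⟩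
      Set.sdiff_subset ht
    simp at hmin
  intro u hu v hv huv
  obtain ⟨xu, hxu, hxuu⟩ := exists_adj_of_reachableIn_insert haT hT.1.2 (hins u hu)
  obtain ⟨xv, hxv, hxvv⟩ := exists_adj_of_reachableIn_insert haT hT.1.2 (hins v hv)
  obtain ⟨yu, hyu, hyuu⟩ :=
    exists_adj_of_reachableIn_insert hbT (fun h => hT.1.2 h.symm) (hins u hu).symm
  obtain ⟨yv, hyv, hyvv⟩ :=
    exists_adj_of_reachableIn_insert hbT (fun h => hT.1.2 h.symm) (hins v hv).symm
  refine hG.adj_of_reachableIn (W₁ := {x | G.ReachableIn (S \ T) a x})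
    (W₂ := {x | G.ReachableIn (S \ T) b x}) ?_ ?_ huv
    (reachableIn_union_pair hxu hxv hxuu.symm hxvv)
    (Set.pair_comm v u ▸ reachableIn_union_pair hyv hyu hyvv.symm hyuu)
  · exact Set.disjoint_left.mpr fun x hxa hxb => hT.1.2 (hxa.trans hxb.symm)
  · exact fun x hxa y hyb hxy => hT.1.2 ((hxa.of_adj_right hyb.right_mem hxy).trans hyb.symm)

lemma separates_union_diff {S T C : Set V} (hTS : T ⊆ S) (hC : C ⊆ S \ T)
    (hclosed : ∀ x ∈ C, ∀ y ∈ S \ T, G.Adj x y → y ∈ C) :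
    Separates G (C ∪ T) (S \ C) := by
  rintro x ⟨hxA, hxB⟩ y ⟨-, hyA⟩ w hw
  have hxC : x ∈ C := hxA.resolve_right fun hxT => hxB ⟨hTS hxT, fun hxC => (hC hxC).2 hxT⟩
  obtain ⟨d, hd, hfst, hsnd⟩ := w.exists_boundary_dart C hxC fun hyC => hyA (.inl hyC)
  have hdw := w.dart_snd_mem_support_of_mem_darts hd
  have hdS : d.snd ∈ S := by
    rcases hw d.snd hdw with (h | h) | h
    exacts [(hC h).1, hTS h, h.1]
  have hdT : d.snd ∈ T := by
    by_contra h
    exact hsnd (hclosed _ hfst _ ⟨hdS, h⟩ d.adj)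
  exact ⟨d.snd, hdw, .inr hdT, hdS, hsnd⟩

lemma Chordal.decomposableOn [Finite V] (hG : Chordal G) (S : Set V) : DecomposableOn G S := by
  induction S using WellFoundedLT.induction with
  | ind S ih =>
  by_cases hS : IsCompleteOn G S
  · exact .complete S hS
  obtain ⟨a, ha, b, hb, hab, hnadj⟩ : ∃ a ∈ S, ∃ b ∈ S, a ≠ b ∧ ¬ G.Adj a b := by
    simpa [IsCompleteOn] using hS
  obtain ⟨T, hT⟩ := exists_minimal_of_wellFoundedLT
    (fun T => T ⊆ S \ {a, b} ∧ ¬ G.ReachableIn (S \ T) a b)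
    ⟨S \ {a, b}, subset_rfl, fun h => hnadj ((h.mono (by grind)).adj_of_pair hab)⟩
  set C := {x | G.ReachableIn (S \ T) a x}
  have hTS : T ⊆ S := hT.1.1.trans Set.sdiff_subset
  have hCS : C ⊆ S \ T := fun x hx => hx.right_mem
  have haC : a ∈ C := .refl ⟨ha, fun h => (hT.1.1 h).2 (.inl rfl)⟩
  have hbC : b ∉ C := hT.1.2
  have hbT : b ∉ T := fun h => (hT.1.1 h).2 (.inr rfl)
  have hunion : (C ∪ T) ∪ (S \ C) = S := by
    ext x; grind
  have hinter : (C ∪ T) ∩ (S \ C) = T := by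
    ext x; grind
  have hdec := DecomposableOn.decomp (C ∪ T) (S \ C)
    (by rw [hinter]; exact hG.isCompleteOn_of_minimal ha hb hT)
    (separates_union_diff hTS hCS fun x hx y hy hxy => hx.of_adj_right hy hxy)
    (ih _ ((Set.ssubset_iff_of_subset (by grind)).mpr ⟨b, hb, by grind⟩))
    (ih _ ((Set.ssubset_iff_of_subset Set.sdiff_subset).mpr ⟨a, ha, fun h => h.2 haC⟩))
  rwa [hunion] at hdec

/-- **A finite undirected graph is decomposable if and only if it is chordal.** -/
theorem decomposable_iff_chordal [Fintype V] (G : SimpleGraph V) :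
    Decomposable G ↔ Chordal G :=
  ⟨fun h _ _ hc hlen => h.hasChord hc hlen fun _ _ => trivial, fun h => h.decomposableOn _⟩
end

section
/- A finite undirected graph G is decomposable if and only if its maximal cliques can be arranged in a junction tree, i.e., a tree whose vertices are the cliques of G such that for any two cliques Q_i and Q_j, the intersection Q_i ∩ Q_j is contained in every clique on the unique path in the tree between Q_i and Q_j. -/
open SimpleGraph

variable {V : Type*}

/-- A maximal clique of `G`: a complete vertex set not properly contained in any other. -/
def MaxClique (G : SimpleGraph V) (s : Set V) : Prop :=
  G.IsClique s ∧ ∀ t : Set V, G.IsClique t → s ⊆ t → s = t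

/-!
Both sides are equivalent to the existence of a *perfect sequence*: an enumeration of the maximal
cliques in which every clique meets the union of its predecessors inside a single predecessor
(running intersection property).

If `(A, B)` is a decomposition, perfect sequences of `A` and of `B` are concatenated, the one of
`B` starting at a clique containing the complete separator `A ∩ B`; the only care needed is for
`A ∩ B` itself, which may be maximal in `A` or `B` without being maximal in `A ∪ B`. Conversely,
the prefixes of a perfect sequence decompose the graph one clique at a time, and the running
intersection property makes the intersection with the previous prefix a complete separator.

Attaching each clique of a perfect sequence to the predecessor containing its intersection with
the earlier ones gives a junction tree. Conversely, listing the cliques of a junction tree by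
distance from a root gives a perfect sequence, since the path from a clique to any clique at most
as far from the root passes through its parent.
-/

section Cliques

variable {G : SimpleGraph V} {A B S s t : Set V}

theorem isCompleteOn_iff_isClique : IsCompleteOn G A ↔ G.IsClique A :=
  ⟨fun h _ ha _ hb hab => h _ ha _ hb hab, fun h _ ha _ hb hab => h ha hb hab⟩

def MaxCliqueOn (G : SimpleGraph V) (S : Set V) : Set V → Prop :=
  Maximal fun t => G.IsClique t ∧ t ⊆ S

theorem maxCliqueOn_univ_iff : MaxCliqueOn G Set.univ s ↔ MaxClique G s :=
  ⟨fun h => ⟨h.prop.1, fun t ht hst => h.eq_of_subset ⟨ht, Set.subset_univ t⟩ hst⟩,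
    fun h => ⟨⟨h.1, Set.subset_univ s⟩, fun t ht hst => (h.2 t ht.1 hst).ge⟩⟩

theorem exists_maxCliqueOn_superset [Finite V] (hc : G.IsClique t) (htS : t ⊆ S) :
    ∃ s, t ⊆ s ∧ MaxCliqueOn G S s :=
  Finite.exists_le_maximal (p := fun t => G.IsClique t ∧ t ⊆ S) ⟨hc, htS⟩

theorem maxCliqueOn_self (hA : G.IsClique A) : MaxCliqueOn G A A :=
  ⟨⟨hA, subset_rfl⟩, fun _ ht _ => ht.2⟩

theorem MaxCliqueOn.mono (hs : MaxCliqueOn G S s) (hsA : s ⊆ A) (hAS : A ⊆ S) :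
    MaxCliqueOn G A s :=
  Maximal.mono hs (fun _ ht => ⟨ht.1, ht.2.trans hAS⟩) ⟨hs.prop.1, hsA⟩

theorem Separates.symm (h : Separates G A B) : Separates G B A := by
  intro b hb a ha w hw
  obtain ⟨v, hv, hvAB⟩ := h a ha b hb w.reverse
    (fun v hv => Set.union_comm A B ▸ hw v (by simpa using hv))
  exact ⟨v, by simpa using hv, Set.inter_comm A B ▸ hvAB⟩

theorem separates_iff_forall_not_adj :
    Separates G A B ↔ ∀ a ∈ A \ B, ∀ b ∈ B \ A, ¬ G.Adj a b := by
  refine ⟨fun h a ha b hb hab => ?_, fun h a ha b hb w hw => ?_⟩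
  · obtain ⟨v, hv, hvA, hvB⟩ := h a ha b hb (.cons hab .nil) (by simp [ha.1, hb.1])
    simp only [Walk.support_cons, Walk.support_nil, List.mem_cons,
      List.not_mem_nil, or_false] at hv
    rcases hv with rfl | rfl
    exacts [ha.2 hvB, hb.2 hvA]
  · replace ha := ha.1
    induction w with
    | nil => exact absurd ha hb.2
    | @cons x y _ hxy w ih =>
      by_cases hxB : x ∈ B
      · exact ⟨x, by simp, ha, hxB⟩
      have hyA : y ∈ A := by
        by_contra hyA
        exact h x ⟨ha, hxB⟩ y ⟨(hw y (by simp)).resolve_left hyA, hyA⟩ hxy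
      obtain ⟨v, hv, hvAB⟩ := ih hb (fun v hv => hw v (by simp [hv])) hyA
      exact ⟨v, by simp [hv], hvAB⟩

theorem Separates.isClique_subset_or (h : Separates G A B) (ht : G.IsClique t)
    (htAB : t ⊆ A ∪ B) : t ⊆ A ∨ t ⊆ B := by
  by_contra! hAB
  obtain ⟨a, hat, haA⟩ := Set.not_subset.1 hAB.1
  obtain ⟨b, hbt, hbB⟩ := Set.not_subset.1 hAB.2
  have ha : a ∈ B \ A := ⟨(htAB hat).resolve_left haA, haA⟩
  have hb : b ∈ A \ B := ⟨(htAB hbt).resolve_right hbB, hbB⟩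
  exact separates_iff_forall_not_adj.1 h b hb a ha (ht hbt hat fun hba => haA (hba ▸ hb.1))

theorem MaxCliqueOn.union_left (hD : G.IsClique (A ∩ B)) (hsep : Separates G A B)
    (hs : MaxCliqueOn G A s) (hB : s = A ∩ B → MaxCliqueOn G B s) :
    MaxCliqueOn G (A ∪ B) s := by
  refine ⟨⟨hs.prop.1, hs.prop.2.trans Set.subset_union_left⟩, fun t ht hst => ?_⟩
  rcases hsep.isClique_subset_or ht.1 ht.2 with htA | htB
  · exact hs.2 ⟨ht.1, htA⟩ hst
  · have hsD : s = A ∩ B :=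
      hs.eq_of_subset ⟨hD, Set.inter_subset_left⟩ (Set.subset_inter hs.prop.2 (hst.trans htB))
    exact (hB hsD).2 ⟨ht.1, htB⟩ hst

theorem MaxCliqueOn.union_right (hD : G.IsClique (A ∩ B)) (hsep : Separates G A B)
    (hs : MaxCliqueOn G B s) (hA : s = A ∩ B → MaxCliqueOn G A s) :
    MaxCliqueOn G (A ∪ B) s := by
  rw [Set.inter_comm] at hD hA
  simpa only [Set.union_comm] using hs.union_left hD hsep.symm hA

end Cliques

section RunningIntersection

variable {α : Type*}

def RunningIntersection (L : List (Set V)) : Prop :=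
  ∀ (l₁ : List (Set V)) (s : Set V) l₂, L = l₁ ++ s :: l₂ → l₁ ≠ [] →
    ∃ t ∈ l₁, ∀ b ∈ l₁, s ∩ b ⊆ t

theorem runningIntersection_singleton (s : Set V) : RunningIntersection [s] := by
  intro l₁ t l₂ h hne
  cases l₁ with
  | nil => exact absurd rfl hne
  | cons x l => simp at h

theorem runningIntersection_map_iff {f : α → Set V} {L : List α} :
    RunningIntersection (L.map f) ↔
      ∀ l₁ a l₂, L = l₁ ++ a :: l₂ → l₁ ≠ [] → ∃ t ∈ l₁, ∀ b ∈ l₁, f a ∩ f b ⊆ f t := by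
  refine ⟨fun h l₁ a l₂ hL hne => ?_, fun h l₁ s l₂ hL hne => ?_⟩
  · obtain ⟨_, hft, hsub⟩ := h (l₁.map f) (f a) (l₂.map f) (by simp [hL]) (by simpa using hne)
    obtain ⟨t, ht, rfl⟩ := List.mem_map.1 hft
    exact ⟨t, ht, fun b hb => hsub _ (List.mem_map_of_mem hb)⟩
  · obtain ⟨m₁, m₂, rfl, rfl, hm₂⟩ := List.map_eq_append_iff.1 hL
    obtain ⟨a, m₂, rfl, rfl, -⟩ := List.map_eq_cons_iff.1 hm₂
    obtain ⟨t, ht, hsub⟩ := h m₁ a m₂ rfl (by simpa using hne)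
    exact ⟨f t, List.mem_map_of_mem ht, by simpa using hsub⟩

variable {L L₁ L₂ : List (Set V)} {u D m : Set V}

theorem RunningIntersection.map {f : Set V → Set V} (h : RunningIntersection L)
    (hf : ∀ s ∈ L, ∀ b ∈ L, ∀ t ∈ L, s ∩ b ⊆ t → f s ∩ f b ⊆ f t) :
    RunningIntersection (L.map f) := by
  rw [runningIntersection_map_iff]
  intro l₁ s l₂ hL hne
  obtain ⟨t, ht, hsub⟩ := h l₁ s l₂ hL hne
  have hmem : ∀ x ∈ l₁, x ∈ L := fun x hx => by simp [hL, hx]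
  exact ⟨t, ht, fun b hb => hf s (by simp [hL]) b (hmem b hb) t (hmem t ht) (hsub b hb)⟩

open scoped Classical in
theorem RunningIntersection.map_replace (h : RunningIntersection L) (hDm : D ⊆ m)
    (hm : ∀ b ∈ L, m ∩ b ⊆ D) (hD : D ∈ L → ∀ t ∈ L, D ⊆ t → t = D) :
    RunningIntersection (L.map fun x => if x = D then m else x) := by
  refine h.map fun s hs b hb t ht hsbt => ?_
  have hle : ∀ x, x ⊆ if x = D then m else x := fun x => by
    split_ifs with hx
    exacts [hx ▸ hDm, subset_rfl]
  by_cases hsD : s = D <;> by_cases hbD : b = D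
  · subst hsD hbD
    simp [hD hs t ht (by simpa using hsbt)]
  · rw [if_pos hsD, if_neg hbD]
    exact fun x hx => hle t (hsbt ⟨hsD ▸ hm b hb hx, hx.2⟩)
  · rw [if_neg hsD, if_pos hbD]
    exact fun x hx => hle t (hsbt ⟨hx.1, hbD ▸ hm s hs ⟨hx.2, hx.1⟩⟩)
  · rw [if_neg hsD, if_neg hbD]
    exact hsbt.trans (hle t)

theorem RunningIntersection.append_cons (h₁ : RunningIntersection L₁)
    (h₂ : RunningIntersection (u :: L₂)) (hu : ∃ w ∈ L₁, ∀ b ∈ L₁, u ∩ b ⊆ w)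
    (hsep : ∀ s ∈ L₂, ∀ b ∈ L₁, s ∩ b ⊆ u) : RunningIntersection (L₁ ++ u :: L₂) := by
  intro l₁ s l₂ hL hne
  rcases List.append_eq_append_iff.1 hL with ⟨_ | ⟨x, a⟩, rfl, ha⟩ | ⟨_ | ⟨x, c⟩, rfl, hc⟩
  · obtain ⟨rfl, -⟩ : u = s ∧ L₂ = l₂ := by simpa using ha
    simpa using hu
  · obtain ⟨rfl, rfl⟩ : u = x ∧ L₂ = a ++ s :: l₂ := by simpa using ha
    obtain ⟨t, ht, hsub⟩ := h₂ (u :: a) s l₂ rfl (List.cons_ne_nil _ _)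
    refine ⟨t, List.mem_append_right _ ht, fun b hb => ?_⟩
    rcases List.mem_append.1 hb with hb | hb
    · exact fun y hy => hsub u List.mem_cons_self ⟨hy.1, hsep s (by simp) b hb hy⟩
    · exact hsub b hb
  · obtain ⟨rfl, -⟩ : s = u ∧ l₂ = L₂ := by simpa using hc
    simpa using hu
  · obtain ⟨rfl, -⟩ : s = x ∧ l₂ = c ++ u :: L₂ := by simpa using hc
    exact h₁ l₁ s c rfl hne

/-- Follow the witnesses of the running intersection property backwards until they fall into the
prefix. -/
theorem RunningIntersection.exists_inter_biUnion_subset {l₁ l₂ : List (Set V)}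
    (h : RunningIntersection (l₁ ++ l₂)) (hne : l₁ ≠ []) {Q : Set V} (hQ : Q ∈ l₁ ++ l₂) :
    ∃ t ∈ l₁, Q ∩ (⋃ b ∈ l₁, b) ⊆ t := by
  obtain ⟨m₁, m₂, hsplit⟩ := List.append_of_mem hQ
  clear hQ
  induction hn : m₁.length using Nat.strong_induction_on generalizing Q m₁ m₂ with
  | _ n ih =>
  by_cases hQl : Q ∈ l₁
  · exact ⟨Q, hQl, Set.inter_subset_left⟩
  have hpre : l₁ <+: m₁ := by
    refine List.prefix_of_prefix_length_le (List.prefix_append _ _) ⟨_, hsplit.symm⟩ ?_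
    by_contra! hlt
    have : m₁ ++ [Q] <+: l₁ :=
      List.prefix_of_prefix_length_le ⟨m₂, by simp [hsplit]⟩ ⟨l₂, rfl⟩
        (by simpa using hlt)
    exact hQl (this.subset (by simp))
  obtain ⟨t, ht, hsub⟩ := h m₁ Q m₂ hsplit (by rintro rfl; exact hne (List.prefix_nil.1 hpre))
  obtain ⟨n₁, n₂, rfl⟩ := List.append_of_mem ht
  obtain ⟨t', ht', hsub'⟩ :=
    ih n₁.length (by simp [← hn]) (Q := t) n₁ (n₂ ++ Q :: m₂) (by simp [hsplit]) rfl
  refine ⟨t', ht', fun x ⟨hxQ, hxU⟩ => hsub' ⟨?_, hxU⟩⟩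
  obtain ⟨b, hb, hxb⟩ := Set.mem_iUnion₂.1 hxU
  exact hsub b (hpre.subset hb) ⟨hxQ, hxb⟩

end RunningIntersection

section PerfectSeq

variable {G : SimpleGraph V} {A B S c u w : Set V} {LA LB : List (Set V)}

structure IsPerfectSeq (G : SimpleGraph V) (S : Set V) (L : List (Set V)) : Prop where
  runningIntersection : RunningIntersection L
  maxCliqueOn_of_mem : ∀ s ∈ L, MaxCliqueOn G S s
  mem_of_maxCliqueOn : ∀ s, MaxCliqueOn G S s → s ∈ L

theorem isPerfectSeq_singleton (hA : G.IsClique A) : IsPerfectSeq G A [A] where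
  runningIntersection := runningIntersection_singleton A
  maxCliqueOn_of_mem := by simpa using maxCliqueOn_self hA
  mem_of_maxCliqueOn s hs := by simpa using hs.eq_of_subset ⟨hA, subset_rfl⟩ hs.prop.2

open scoped Classical in
/-- `A ∩ B` may be maximal in `A` without being maximal in `A ∪ B`; then the first clique `u` of
`B` takes its place, which changes no intersection with the other cliques of `A`. -/
theorem IsPerfectSeq.union_of_maxCliqueOn_inter (hD : G.IsClique (A ∩ B))
    (hsep : Separates G A B) (hA : IsPerfectSeq G A LA) (hB : IsPerfectSeq G B (u :: LB))
    (hDu : A ∩ B ⊆ u) (hmax : MaxCliqueOn G A (A ∩ B)) :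
    IsPerfectSeq G (A ∪ B) (LA.map (fun x => if x = A ∩ B then u else x) ++ u :: LB) := by
  have huB : u ⊆ B := (hB.maxCliqueOn_of_mem u List.mem_cons_self).prop.2
  have hsubA : ∀ x ∈ LA, x ⊆ A := fun x hx => (hA.maxCliqueOn_of_mem x hx).prop.2
  refine ⟨?_, fun s hs => ?_, fun s hs => ?_⟩
  · have hAu := hA.runningIntersection.map_replace hDu
      (fun b hb y hy => ⟨hsubA b hb hy.2, huB hy.1⟩)
      (fun _ t ht hDt => (hmax.eq_of_subset (hA.maxCliqueOn_of_mem t ht).prop hDt).symm)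
    refine hAu.append_cons hB.runningIntersection
      ⟨u, List.mem_map.2 ⟨_, hA.mem_of_maxCliqueOn _ hmax, if_pos rfl⟩,
        fun _ _ => Set.inter_subset_left⟩ fun s hs b hb => ?_
    obtain ⟨x, hx, rfl⟩ := List.mem_map.1 hb
    split_ifs with hxD
    · exact Set.inter_subset_right
    · exact fun y hy =>
        hDu ⟨hsubA x hx hy.2, (hB.maxCliqueOn_of_mem s (by simp [hs])).prop.2 hy.1⟩
  · rcases List.mem_append.1 hs with hs | hs
    · obtain ⟨x, hx, rfl⟩ := List.mem_map.1 hs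
      split_ifs with hxD
      · exact (hB.maxCliqueOn_of_mem u List.mem_cons_self).union_right hD hsep (· ▸ hmax)
      · exact (hA.maxCliqueOn_of_mem x hx).union_left hD hsep (absurd · hxD)
    · exact (hB.maxCliqueOn_of_mem s hs).union_right hD hsep (· ▸ hmax)
  · by_cases hsB : s ⊆ B
    · exact List.mem_append_right _
        (hB.mem_of_maxCliqueOn s (hs.mono hsB Set.subset_union_right))
    have hsA : s ⊆ A := (hsep.isClique_subset_or hs.prop.1 hs.prop.2).resolve_right hsB
    refine List.mem_append_left _ (List.mem_map.2 ⟨s, hA.mem_of_maxCliqueOn s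
      (hs.mono hsA Set.subset_union_left),
      if_neg fun (hsD : s = A ∩ B) => hsB (hsD ▸ Set.inter_subset_right)⟩)

open scoped Classical in
/-- Here `A ∩ B` occurs in the sequence of `B` only if it is its first clique `u`; a maximal clique
`w ⊇ A ∩ B` of `A` takes its place. -/
theorem IsPerfectSeq.union_of_not_maxCliqueOn_inter (hD : G.IsClique (A ∩ B))
    (hsep : Separates G A B) (hA : IsPerfectSeq G A LA) (hB : IsPerfectSeq G B (u :: LB))
    (hDu : A ∩ B ⊆ u) (hw : MaxCliqueOn G A w) (hDw : A ∩ B ⊆ w)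
    (hmax : ¬ MaxCliqueOn G A (A ∩ B)) :
    IsPerfectSeq G (A ∪ B) (LA ++ (u :: LB).map fun x => if x = A ∩ B then w else x) := by
  have hsubA : ∀ x ∈ LA, x ⊆ A := fun x hx => (hA.maxCliqueOn_of_mem x hx).prop.2
  have hsubB : ∀ x ∈ u :: LB, x ⊆ B := fun x hx => (hB.maxCliqueOn_of_mem x hx).prop.2
  have hu : ∀ x ∈ u :: LB, x = A ∩ B → u = A ∩ B := fun x hx hxD =>
    ((hB.maxCliqueOn_of_mem x hx).eq_of_subset
      (hB.maxCliqueOn_of_mem u List.mem_cons_self).prop (hxD ▸ hDu)).symm.trans hxD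
  have huw : u ⊆ if u = A ∩ B then w else u := by
    split_ifs with huD
    exacts [huD ▸ hDw, subset_rfl]
  refine ⟨?_, fun s hs => ?_, fun s hs => ?_⟩
  · have hBw := hB.runningIntersection.map_replace hDw
      (fun b hb y hy => ⟨hw.prop.2 hy.1, hsubB b hb hy.2⟩)
      (fun hDmem t ht hDt => ((hB.maxCliqueOn_of_mem _ hDmem).eq_of_subset
        (hB.maxCliqueOn_of_mem t ht).prop hDt).symm)
    rw [List.map_cons] at hBw ⊢
    refine hA.runningIntersection.append_cons hBw
      ⟨w, hA.mem_of_maxCliqueOn w hw, fun b hb => ?_⟩ fun s hs b hb => ?_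
    · split_ifs
      · exact Set.inter_subset_left
      · exact fun y hy => hDw ⟨hsubA b hb hy.2, hsubB u List.mem_cons_self hy.1⟩
    · obtain ⟨x, hx, rfl⟩ := List.mem_map.1 hs
      by_cases hxD : x = A ∩ B
      · rw [if_pos hxD, if_pos (hu x (List.mem_cons_of_mem u hx) hxD)]
        exact Set.inter_subset_left
      · rw [if_neg hxD]
        exact fun y hy => huw (hDu ⟨hsubA b hb hy.2, hsubB x (List.mem_cons_of_mem u hx) hy.1⟩)
  · rcases List.mem_append.1 hs with hs | hs
    · exact (hA.maxCliqueOn_of_mem s hs).union_left hD hsep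
        fun hsD => absurd (hsD ▸ hA.maxCliqueOn_of_mem s hs) hmax
    · obtain ⟨x, hx, rfl⟩ := List.mem_map.1 hs
      split_ifs with hxD
      · exact hw.union_left hD hsep fun hwD => absurd (hwD ▸ hw) hmax
      · exact (hB.maxCliqueOn_of_mem x hx).union_right hD hsep (absurd · hxD)
  · by_cases hsA : s ⊆ A
    · exact List.mem_append_left _
        (hA.mem_of_maxCliqueOn s (hs.mono hsA Set.subset_union_left))
    have hsB : s ⊆ B := (hsep.isClique_subset_or hs.prop.1 hs.prop.2).resolve_left hsA
    refine List.mem_append_right _ (List.mem_map.2 ⟨s, hB.mem_of_maxCliqueOn s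
      (hs.mono hsB Set.subset_union_right),
      if_neg fun (hsD : s = A ∩ B) => hsA (hsD ▸ Set.inter_subset_left)⟩)

theorem exists_isPerfectSeq_union [Finite V] (hD : IsCompleteOn G (A ∩ B))
    (hsep : Separates G A B)
    (hA : ∀ c, G.IsClique c → c ⊆ A → ∃ Q L, c ⊆ Q ∧ IsPerfectSeq G A (Q :: L))
    (hB : ∀ c, G.IsClique c → c ⊆ B → ∃ Q L, c ⊆ Q ∧ IsPerfectSeq G B (Q :: L))
    (hc : G.IsClique c) (hcA : c ⊆ A) :
    ∃ Q L, c ⊆ Q ∧ IsPerfectSeq G (A ∪ B) (Q :: L) := by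
  rw [isCompleteOn_iff_isClique] at hD
  obtain ⟨a, LA, hca, hLA⟩ := hA c hc hcA
  obtain ⟨u, LB, hDu, hLB⟩ := hB (A ∩ B) hD Set.inter_subset_right
  by_cases hmax : MaxCliqueOn G A (A ∩ B)
  · refine ⟨_, _, hca.trans ?_, hLA.union_of_maxCliqueOn_inter hD hsep hLB hDu hmax⟩
    dsimp only
    split_ifs with haD
    exacts [haD ▸ hDu, subset_rfl]
  · obtain ⟨w, hDw, hw⟩ := exists_maxCliqueOn_superset hD (Set.inter_subset_left (t := B))
    exact ⟨a, _, hca, hLA.union_of_not_maxCliqueOn_inter hD hsep hLB hDu hw hDw hmax⟩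

theorem DecomposableOn.exists_isPerfectSeq [Finite V] (h : DecomposableOn G S)
    (hc : G.IsClique c) (hcS : c ⊆ S) : ∃ Q L, c ⊆ Q ∧ IsPerfectSeq G S (Q :: L) := by
  induction h generalizing c with
  | complete A hA =>
    exact ⟨A, [], hcS, isPerfectSeq_singleton (isCompleteOn_iff_isClique.1 hA)⟩
  | decomp A B hD hsep _ _ ihA ihB =>
    rcases hsep.isClique_subset_or hc hcS with hcA | hcB
    · exact exists_isPerfectSeq_union hD hsep (fun _ => ihA) (fun _ => ihB) hc hcA
    · rw [Set.union_comm]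
      exact exists_isPerfectSeq_union (Set.inter_comm A B ▸ hD) hsep.symm (fun _ => ihB)
        (fun _ => ihA) hc hcB

end PerfectSeq

section Decomposable

variable {G : SimpleGraph V} {L : List (Set V)}

theorem decomposableOn_of_runningIntersection (h : RunningIntersection L)
    (hclique : ∀ s ∈ L, G.IsClique s) (hedge : ∀ x y, G.Adj x y → ∃ s ∈ L, x ∈ s ∧ y ∈ s) :
    DecomposableOn G (⋃ s ∈ L, s) := by
  suffices ∀ l₁ l₂, L = l₁ ++ l₂ → DecomposableOn G (⋃ s ∈ l₁, s) from this L [] (by simp)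
  intro l₁
  induction l₁ using List.reverseRecOn with
  | nil => exact fun _ _ => by simpa using DecomposableOn.complete ∅ (by simp [IsCompleteOn])
  | append_singleton l s ih =>
    intro l₂ hL
    have hL' : L = l ++ s :: l₂ := by simp [hL]
    have hU : (⋃ b ∈ l ++ [s], b) = (⋃ b ∈ l, b) ∪ s := by
      simp [Set.iUnion_or, Set.iUnion_union_distrib]
    rw [hU]
    refine .decomp _ _ ?_ ?_ (ih _ hL')
      (.complete _ (isCompleteOn_iff_isClique.2 (hclique s (by simp [hL']))))
    · rw [isCompleteOn_iff_isClique]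
      rcases eq_or_ne l [] with rfl | hne
      · simp
      obtain ⟨t, ht, hst⟩ := (hL' ▸ h).exists_inter_biUnion_subset hne (Q := s) (by simp)
      exact (hclique t (by simp [hL', ht])).subset (Set.inter_comm _ s ▸ hst)
    · rw [separates_iff_forall_not_adj]
      rintro x ⟨hxU, hxs⟩ y ⟨hys, hyU⟩ hxy
      obtain ⟨Q, hQ, hxQ, hyQ⟩ := hedge x y hxy
      obtain ⟨t, ht, hQt⟩ := (hL ▸ h).exists_inter_biUnion_subset (by simp) (hL ▸ hQ)
      have hxt : x ∈ t := hQt ⟨hxQ, by rw [hU]; exact Or.inl hxU⟩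
      have hyt : y ∈ t := hQt ⟨hyQ, by rw [hU]; exact Or.inr hys⟩
      rcases List.mem_append.1 ht with ht | ht
      · exact hyU (Set.mem_biUnion ht hyt)
      · exact hxs (List.mem_singleton.1 ht ▸ hxt)

theorem decomposable_of_runningIntersection (h : RunningIntersection L)
    (hclique : ∀ s ∈ L, G.IsClique s) (hcover : ∀ c, G.IsClique c → ∃ s ∈ L, c ⊆ s) :
    Decomposable G := by
  have hU : (⋃ s ∈ L, s) = Set.univ := by
    refine Set.eq_univ_of_forall fun x => ?_
    obtain ⟨s, hs, hxs⟩ := hcover {x} (isClique_singleton x)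
    exact Set.mem_biUnion hs (hxs rfl)
  rw [Decomposable, ← hU]
  refine decomposableOn_of_runningIntersection h hclique fun x y hxy => ?_
  obtain ⟨s, hs, hxys⟩ := hcover {x, y} (isClique_pair.2 fun _ => hxy)
  exact ⟨s, hs, hxys (by simp), hxys (by simp)⟩

end Decomposable

section ParentMap

variable {α : Type*} {T : SimpleGraph α} {r : α → ℕ} {par : α → α}

def IsParentMap (T : SimpleGraph α) (r : α → ℕ) (par : α → α) : Prop :=
  ∀ ⦃a b⦄, T.Adj a b → (par a = b ∧ r b < r a) ∨ (par b = a ∧ r a < r b)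

namespace IsParentMap

theorem eq_par_of_adj (H : IsParentMap T r par) {a b : α} (hab : T.Adj a b) (hb : r b ≤ r a) :
    par a = b ∧ r b < r a :=
  (H hab).resolve_right fun h => (not_lt.2 hb) h.2

/-- A path has no interior local maximum of the rank: both of its neighbours would be its
parent. -/
theorem rank_le_max (H : IsParentMap T r par) {a b : α} {w : T.Walk a b} (hw : w.IsPath) :
    ∀ k ∈ w.support, r k ≤ max (r a) (r b) := by
  induction w with
  | nil => simp
  | @cons a x b hax w ih =>
    rw [Walk.cons_isPath_iff] at hw
    have hx : r x ≤ max (r a) (r b) := by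
      by_contra! hx
      obtain ⟨hxa, -⟩ := H.eq_par_of_adj hax.symm (le_max_left _ _ |>.trans hx.le)
      cases w with
      | nil => exact lt_irrefl _ ((le_max_right _ _).trans_lt hx)
      | @cons _ y _ hxy w =>
        have hy := ih hw.1 y (by simp)
        rw [max_eq_left ((le_max_right _ _).trans hx.le)] at hy
        obtain ⟨hxy, -⟩ := H.eq_par_of_adj hxy hy
        exact hw.2 (by simp [← hxa, hxy])
    intro k hk
    rcases List.mem_cons.1 (Walk.support_cons _ _ ▸ hk) with rfl | hk
    · exact le_max_left _ _
    · exact (ih hw.1 k hk).trans (max_le hx (le_max_right _ _))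

theorem eq_par_of_isPath_cons (H : IsParentMap T r par) {a x b : α} {hax : T.Adj a x}
    {w : T.Walk x b} (hw : (Walk.cons hax w).IsPath) (hb : r b ≤ r a) :
    par a = x ∧ r x < r a :=
  H.eq_par_of_adj hax (by simpa [max_eq_left hb] using H.rank_le_max hw x (by simp))

/-- Both paths leave the endpoint of larger rank through its parent. -/
theorem isAcyclic (H : IsParentMap T r par) : T.IsAcyclic := by
  rw [isAcyclic_iff_subsingleton_path]
  refine fun a b => ⟨fun p q => Subtype.ext ?_⟩
  obtain ⟨p, hp⟩ := p
  obtain ⟨q, hq⟩ := q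
  change p = q
  induction hn : p.length using Nat.strong_induction_on generalizing a b with
  | _ n ih =>
  wlog hab : r b ≤ r a generalizing a b
  · simpa using congrArg Walk.reverse
      (this b a p.reverse hp.reverse q.reverse hq.reverse (by simpa using hn) (le_of_not_ge hab))
  cases p with
  | nil => exact (Walk.isPath_iff_nil.1 hq).eq_nil.symm
  | @cons _ x _ hax p =>
    cases q with
    | nil => exact absurd ((Walk.cons_isPath_iff _ _).1 hp).2 (by simp)
    | @cons _ y _ hay q =>
      obtain ⟨rfl, -⟩ := H.eq_par_of_isPath_cons hp hab
      obtain ⟨rfl, -⟩ := H.eq_par_of_isPath_cons hq hab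
      rw [ih p.length (by simp [← hn]) _ _ p hp.of_cons q hq.of_cons rfl]

theorem inter_subset_of_mem_support (H : IsParentMap T r par) {f : α → Set V}
    (hf : ∀ a b, b ≠ a → r b ≤ r a → f a ∩ f b ⊆ f (par a)) {a b : α} {w : T.Walk a b}
    (hw : w.IsPath) : ∀ k ∈ w.support, f a ∩ f b ⊆ f k := by
  induction hn : w.length using Nat.strong_induction_on generalizing a b with
  | _ n ih =>
  wlog hab : r b ≤ r a generalizing a b
  · intro k hk
    rw [Set.inter_comm]
    exact this hw.reverse (by simpa using hn) (le_of_not_ge hab) k (by simpa using hk)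
  cases w with
  | nil => simp
  | @cons _ x _ hax w =>
    obtain ⟨rfl, -⟩ := H.eq_par_of_isPath_cons hw hab
    have hba : b ≠ a := fun hba => ((Walk.cons_isPath_iff _ _).1 hw).2 (hba ▸ w.end_mem_support)
    intro k hk
    rcases List.mem_cons.1 (Walk.support_cons _ _ ▸ hk) with rfl | hk
    · exact Set.inter_subset_left
    · calc f a ∩ f b ⊆ f (par a) ∩ f b :=
            Set.subset_inter (hf a b hba hab) Set.inter_subset_right
        _ ⊆ f k := ih w.length (by simp [← hn]) hw.of_cons rfl k hk

end IsParentMap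

end ParentMap

section JunctionTree

variable {α : Type*} {T : SimpleGraph α} {f : α → Set V}

def IsJunctionTree (T : SimpleGraph α) (f : α → Set V) : Prop :=
  T.IsTree ∧ ∀ (a b : α) (w : T.Walk a b), w.IsPath → ∀ k ∈ w.support, f a ∩ f b ⊆ f k

/-- Attach every set to a parent of smaller rank that contains its intersections with all sets of
smaller rank. -/
theorem exists_isJunctionTree_of_rank [Nonempty α] {r : α → ℕ} (hr : r.Injective)
    (hpar : ∀ a, (∃ b, r b < r a) → ∃ p, r p < r a ∧ ∀ b, r b < r a → f a ∩ f b ⊆ f p) :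
    ∃ T : SimpleGraph α, IsJunctionTree T f := by
  choose! par hpar_lt hpar_sub using hpar
  let T := SimpleGraph.fromRel fun a b => par a = b ∧ r b < r a
  have H : IsParentMap T r par := fun a b hab => ((SimpleGraph.fromRel_adj _ a b).1 hab).2
  have hroot : ∀ n a, r a = n → T.Reachable a (Function.argmin r) := by
    intro n
    induction n using Nat.strong_induction_on with
    | _ n ih =>
    intro a rfl
    by_cases h : ∃ b, r b < r a
    · have hadj : T.Adj a (par a) := (SimpleGraph.fromRel_adj _ _ _).2
        ⟨fun hpa => (hpar_lt a h).ne' (congrArg r hpa), Or.inl ⟨rfl, hpar_lt a h⟩⟩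
      exact hadj.reachable.trans (ih _ (hpar_lt a h) _ rfl)
    · simp only [not_exists, not_lt] at h
      rw [hr (le_antisymm (h _) (Function.argmin_le r a))]
  refine ⟨T, ⟨.mk fun a b => (hroot _ a rfl).trans (hroot _ b rfl).symm, H.isAcyclic⟩,
    fun a b w hw => H.inter_subset_of_mem_support (fun a b hba hb => ?_) hw⟩
  have hlt : r b < r a := hb.lt_of_ne (hr.ne hba)
  exact hpar_sub a ⟨b, hlt⟩ b hlt

/-- Rank a vertex by the length of its path from a root, and take as parent the vertex before it
on that path. -/
theorem SimpleGraph.IsTree.exists_isParentMap (hT : T.IsTree) :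
    ∃ (r : α → ℕ) (par : α → α), IsParentMap T r par := by
  obtain ⟨ρ⟩ := hT.connected.nonempty
  choose P hP huniq using hT.existsUnique_path ρ
  refine ⟨fun a => (P a).length, fun a => (P a).penultimate, fun a b hab => ?_⟩
  by_cases hb : b ∈ (P a).support
  · left
    dsimp only
    rw [hT.isAcyclic.path_concat (hP b) (hP a) hab.symm hb]
    simp
  · right
    dsimp only
    rw [← huniq b _ ((hP a).concat hb hab)]
    simp

theorem runningIntersection_map_of_pairwise {r : α → ℕ} {par : α → α} {L : List α}
    (hL : ∀ a, a ∈ L) (hnd : L.Nodup) (hsorted : L.Pairwise fun a b => r a ≤ r b)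
    (hpar : ∀ a b, b ≠ a → r b ≤ r a → r (par a) < r a ∧ f a ∩ f b ⊆ f (par a)) :
    RunningIntersection (L.map f) := by
  refine runningIntersection_map_iff.2 fun l₁ a l₂ hsplit hne => ⟨par a, ?_, fun b hb => ?_⟩
  all_goals rw [hsplit] at hL hnd hsorted
  · obtain ⟨b, hb⟩ := List.exists_mem_of_ne_nil l₁ hne
    have hlt := (hpar a b (List.nodup_append.1 hnd |>.2.2 b hb a (by simp))
      ((List.pairwise_append.1 hsorted).2.2 b hb a (by simp))).1
    rcases List.mem_append.1 (hL (par a)) with h | h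
    · exact h
    · rcases List.mem_cons.1 h with h | h
      · exact absurd (h ▸ hlt) (lt_irrefl _)
      · exact absurd ((List.pairwise_cons.1 (List.pairwise_append.1 hsorted).2.1).1 _ h)
          (not_le.2 hlt)
  · exact (hpar a b (List.nodup_append.1 hnd |>.2.2 b hb a (by simp))
      ((List.pairwise_append.1 hsorted).2.2 b hb a (by simp))).2

/-- List the vertices by rank; the path from a vertex to one of at most its rank leaves it through
its parent. -/
theorem IsJunctionTree.exists_runningIntersection [Finite α] (hJ : IsJunctionTree T f) :
    ∃ L : List α, (∀ a, a ∈ L) ∧ RunningIntersection (L.map f) := by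
  obtain ⟨r, par, H⟩ := hJ.1.exists_isParentMap
  obtain ⟨L, hnd, hL⟩ := Finite.exists_univ_list α
  let le : α → α → Bool := fun a b => r a ≤ r b
  have hperm := L.mergeSort_perm le
  have hsorted : (L.mergeSort le).Pairwise fun a b => r a ≤ r b := by
    simpa [le] using L.pairwise_mergeSort (le := le)
      (fun a b c hab hbc => by simp_all [le]; omega) (fun a b => by simp [le]; omega)
  refine ⟨L.mergeSort le, fun a => hperm.mem_iff.2 (hL a), runningIntersection_map_of_pairwise
    (par := par) (fun a => hperm.mem_iff.2 (hL a)) (hperm.nodup_iff.2 hnd) hsorted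
    fun a b hba hb => ?_⟩
  obtain ⟨w, hw, -⟩ := hJ.1.existsUnique_path a b
  cases w with
  | nil => exact absurd rfl hba
  | cons hax w =>
    obtain ⟨rfl, hlt⟩ := H.eq_par_of_isPath_cons hw hb
    exact ⟨hlt, hJ.2 a b _ hw _ (by simp)⟩

theorem exists_isJunctionTree_of_runningIntersection [Nonempty α] {L : List α}
    (hL : ∀ a, a ∈ L) (h : RunningIntersection (L.map f)) :
    ∃ T : SimpleGraph α, IsJunctionTree T f := by
  classical
  have hmem_take : ∀ {a b}, b ∈ L.take (L.idxOf a) ↔ L.idxOf b < L.idxOf a :=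
    List.mem_take_iff_idxOf_lt (hL _)
  refine exists_isJunctionTree_of_rank (r := L.idxOf)
    (fun a b hab => (List.idxOf_inj (hL a)).1 hab) fun a ⟨b, hb⟩ => ?_
  have hsplit : L = L.take (L.idxOf a) ++ a :: L.drop (L.idxOf a + 1) := by
    have ha := List.idxOf_lt_length_of_mem (hL a)
    conv_lhs => rw [← List.take_append_drop (L.idxOf a) L, List.drop_eq_getElem_cons ha,
      List.getElem_idxOf ha]
  obtain ⟨t, ht, hsub⟩ := runningIntersection_map_iff.1 h _ _ _ hsplit
    (List.ne_nil_of_mem (hmem_take.2 hb))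
  exact ⟨t, hmem_take.1 ht, fun b hb => hsub b (hmem_take.2 hb)⟩

theorem exists_isJunctionTree_iff [Finite α] [Nonempty α] :
    (∃ T : SimpleGraph α, IsJunctionTree T f) ↔
      ∃ L : List α, (∀ a, a ∈ L) ∧ RunningIntersection (L.map f) :=
  ⟨fun ⟨_, hJ⟩ => hJ.exists_runningIntersection,
    fun ⟨_, hL, h⟩ => exists_isJunctionTree_of_runningIntersection hL h⟩

end JunctionTree

theorem decomposable_iff_exists_runningIntersection [Finite V] {G : SimpleGraph V} :
    Decomposable G ↔ ∃ L : List {s // MaxClique G s},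
      (∀ a, a ∈ L) ∧ RunningIntersection (L.map Subtype.val) := by
  constructor
  · intro h
    obtain ⟨Q, L, -, hL⟩ := h.exists_isPerfectSeq isClique_empty (Set.empty_subset _)
    have hmax : ∀ s ∈ Q :: L, MaxClique G s := fun s hs =>
      maxCliqueOn_univ_iff.1 (hL.maxCliqueOn_of_mem s hs)
    lift Q :: L to List {s // MaxClique G s} using hmax with L'
    refine ⟨L', fun a => ?_, hL.runningIntersection⟩
    obtain ⟨b, hb, hba⟩ :=
      List.mem_map.1 (hL.mem_of_maxCliqueOn a.1 (maxCliqueOn_univ_iff.2 a.2))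
    exact Subtype.ext hba ▸ hb
  · rintro ⟨L, hL, h⟩
    refine decomposable_of_runningIntersection h (fun s hs => ?_) fun c hc => ?_
    · obtain ⟨a, -, rfl⟩ := List.mem_map.1 hs
      exact a.2.1
    · obtain ⟨s, hcs, hs⟩ := exists_maxCliqueOn_superset hc (Set.subset_univ c)
      exact ⟨s, List.mem_map.2 ⟨⟨s, maxCliqueOn_univ_iff.1 hs⟩, hL _, rfl⟩, hcs⟩

/-- **A finite undirected graph `G` is decomposable if and only if its maximal cliques
can be arranged in a junction tree**: a tree `T` whose vertices are the maximal cliques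
of `G` such that for any two cliques `Qi`, `Qj`, the intersection `Qi ∩ Qj` is contained
in every clique on the (unique) path in `T` between `Qi` and `Qj`. -/
theorem decomposable_iff_junctionTree [Fintype V] (G : SimpleGraph V) :
    Decomposable G ↔
      ∃ T : SimpleGraph {s : Set V // MaxClique G s}, T.IsTree ∧
        ∀ (Qi Qj : {s : Set V // MaxClique G s}) (w : T.Walk Qi Qj), w.IsPath →
          ∀ Q ∈ w.support, Qi.val ∩ Qj.val ⊆ Q.val := by
  obtain ⟨s, -, hs⟩ := exists_maxCliqueOn_superset (G := G) isClique_empty (Set.subset_univ ∅)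
  have : Nonempty {s // MaxClique G s} := ⟨⟨s, maxCliqueOn_univ_iff.1 hs⟩⟩
  exact decomposable_iff_exists_runningIntersection.trans exists_isJunctionTree_iff.symm
end
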